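/- Let G=(V,E) be a mixed graph and A, B, C disjoint subsets of V. Then A ⊥_m B | C in G if and only if C separates A from B in the augmented graph (G_{an(A∪B∪C)})^a of the induced subgraph on the ancestor set of A∪B∪C. -/

import Mathlib

structure MixedGraph (V : Type*) where
  dir : V → V → Prop
  bi : V → V → Prop
  bi_symm : ∀ {a b : V}, bi a b → bi b a

namespace MixedGraph

variable {V : Type*}

/-- A single edge traversal: a directed edge traversed forwards (`a → b`),
a directed edge traversed backwards (`a ← b`), or a bi-directed edge (`a ↔ b`). -/
inductive Step (G : MixedGraph V) : V → V → Type _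
  | fwd {a b : V} : G.dir a b → G.Step a b
  | bwd {a b : V} : G.dir b a → G.Step a b
  | bi  {a b : V} : G.bi a b → G.Step a b

/-- The edge has an arrowhead at its second endpoint. -/
def Step.arrowAtEnd {G : MixedGraph V} : {a b : V} → G.Step a b → Prop
  | _, _, .fwd _ => True
  | _, _, .bwd _ => False
  | _, _, .bi _ => True

/-- The edge has an arrowhead at its first endpoint. -/
def Step.arrowAtStart {G : MixedGraph V} : {a b : V} → G.Step a b → Prop
  | _, _, .fwd _ => False
  | _, _, .bwd _ => True
  | _, _, .bi _ => True

/-- Paths (possibly self-intersecting) in a mixed graph. -/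
inductive Walk (G : MixedGraph V) : V → V → Type _
  | nil {a : V} : G.Walk a a
  | cons {a b c : V} : G.Step a b → G.Walk b c → G.Walk a c

namespace Walk

variable {G : MixedGraph V}

def length : {a b : V} → G.Walk a b → ℕ
  | _, _, .nil => 0
  | _, _, .cons _ w => w.length + 1

def verts : {a b : V} → G.Walk a b → List V
  | a, _, .nil => [a]
  | a, _, .cons _ w => a :: w.verts

/-- The intermediate vertices of a walk. -/
def interm {a b : V} (w : G.Walk a b) : List V := w.verts.tail.dropLast

def append : {a b c : V} → G.Walk a b → G.Walk b c → G.Walk a c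
  | _, _, _, .nil, w' => w'
  | _, _, _, .cons s w, w' => .cons s (w.append w')

/-- Every intermediate vertex of the walk is a collider. -/
def IsPureCollider : {a b : V} → G.Walk a b → Prop
  | _, _, .nil => True
  | _, _, .cons _ .nil => True
  | _, _, .cons s (.cons t w) =>
      s.arrowAtEnd ∧ t.arrowAtStart ∧ (Walk.cons t w).IsPureCollider

/-- The walk is m-connecting given `C`: every non-collider on it is outside `C`
and every collider on it is in `C`. -/
def IsMConnecting (C : Set V) : {a b : V} → G.Walk a b → Prop
  | _, _, .nil => True
  | _, _, .cons _ .nil => True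
  | _, _, .cons (b := m) s (.cons t w) =>
      ((s.arrowAtEnd ∧ t.arrowAtStart) ↔ m ∈ C) ∧ (Walk.cons t w).IsMConnecting C

end Walk

variable (G : MixedGraph V)

/-- `A` and `B` are m-separated given `C`: no m-connecting walk given `C`
between a vertex of `A` and a vertex of `B`. -/
def MSep (A B C : Set V) : Prop :=
  ∀ a ∈ A, ∀ b ∈ B, ∀ w : G.Walk a b, ¬ w.IsMConnecting C

/-- `u` and `v` are joined by a pure-collider path (with at least one edge). -/
def ColliderConn (u v : V) : Prop :=
  ∃ w : G.Walk u v, 0 < w.length ∧ w.IsPureCollider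

/-- Vertices connected to `S` by a (possibly empty) path of bi-directed edges. -/
def district (S : Set V) : Set V :=
  {v | ∃ s ∈ S, Relation.ReflTransGen G.bi s v}

/-- Children of vertices in `S`. -/
def ch (S : Set V) : Set V := {v | ∃ a ∈ S, G.dir a v}

/-- Ancestors of `S` (including `S` itself). -/
def an (S : Set V) : Set V :=
  {v | ∃ s ∈ S, Relation.ReflTransGen G.dir v s}

/-- The subgraph induced by `W`: edges with both endpoints in `W`. -/
def induce (W : Set V) : MixedGraph V where
  dir a b := G.dir a b ∧ a ∈ W ∧ b ∈ W
  bi a b := G.bi a b ∧ a ∈ W ∧ b ∈ W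
  bi_symm h := ⟨G.bi_symm h.1, h.2.2, h.2.1⟩

/-- Separation in an undirected graph with adjacency `adj`: every path between
`A` and `B` intersects `C`, i.e. `B` is not reachable from `A` avoiding `C`. -/
def UndirSep (adj : V → V → Prop) (A B C : Set V) : Prop :=
  ∀ a ∈ A, ∀ b ∈ B, ¬ Relation.ReflTransGen (fun x y => adj x y ∧ y ∉ C) a b

inductive EdgeKind | fwd | bwd | bi
deriving DecidableEq

def Step.kind {G : MixedGraph V} : {a b : V} → G.Step a b → EdgeKind
  | _, _, .fwd _ => .fwd
  | _, _, .bwd _ => .bwd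
  | _, _, .bi _ => .bi

def Walk.kinds {G : MixedGraph V} : {a b : V} → G.Walk a b → List EdgeKind
  | _, _, .nil => []
  | _, _, .cons s w => s.kind :: w.kinds

end MixedGraph

/-!
Let `w` be an m-connecting walk from `a ∈ A` to `b ∈ B`. Every vertex of `w` is a collider, hence
in `C`, or has a directed edge of `w` pointing away from it; following such edges along `w` ends
at a collider or at an endpoint, so `w` lies in `an(A ∪ B ∪ C)`. Cutting `w` at its
non-colliders, which avoid `C`, leaves pure-collider segments: a path from `a` to `b` in the
augmented graph avoiding `C`.

Conversely, follow a `C`-avoiding path of the augmented graph, keeping an m-connecting walk from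
`A` to the current vertex that ends with an arrowhead whenever that vertex lies in `C`. The only
obstruction is a vertex `u ∉ C` that would become a collider. Follow a directed path from `u`
into `A ∪ B ∪ C`. If it meets `C`, go down to its first vertex in `C` and back up, so that `u` is
now entered through a tail; if it reaches `A` first, restart from there along the reversed path;
if it reaches `B` first, going down along it already gives an m-connecting walk from `A` to `B`.
-/

namespace MixedGraph

variable {V : Type*} {G : MixedGraph V}

lemma mem_an_of_mem {S : Set V} {x : V} (hx : x ∈ S) : x ∈ G.an S :=
  ⟨x, hx, .refl⟩

lemma mem_an_of_dir {S : Set V} {x y : V} (h : G.dir x y) (hy : y ∈ G.an S) : x ∈ G.an S :=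
  let ⟨s, hs, hys⟩ := hy
  ⟨s, hs, .head h hys⟩

namespace Step

variable {W : Set V} {a b : V}

def ofInduce : ∀ {a b : V}, (G.induce W).Step a b → G.Step a b
  | _, _, .fwd h => .fwd h.1
  | _, _, .bwd h => .bwd h.1
  | _, _, .bi h => .bi h.1

lemma ofInduce_arrowAtStart (s : (G.induce W).Step a b) :
    s.ofInduce.arrowAtStart ↔ s.arrowAtStart := by
  cases s <;> rfl

lemma ofInduce_arrowAtEnd (s : (G.induce W).Step a b) :
    s.ofInduce.arrowAtEnd ↔ s.arrowAtEnd := by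
  cases s <;> rfl

lemma left_mem_of_induce (s : (G.induce W).Step a b) : a ∈ W := by
  cases s with
  | fwd h => exact h.2.1
  | bwd h => exact h.2.2
  | bi h => exact h.2.1

def toInduce : ∀ {a b : V}, G.Step a b → a ∈ W → b ∈ W → (G.induce W).Step a b
  | _, _, .fwd h, ha, hb => .fwd ⟨h, ha, hb⟩
  | _, _, .bwd h, ha, hb => .bwd ⟨h, hb, ha⟩
  | _, _, .bi h, ha, hb => .bi ⟨h, ha, hb⟩

lemma toInduce_arrowAtStart (s : G.Step a b) (ha : a ∈ W) (hb : b ∈ W) :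
    (s.toInduce ha hb).arrowAtStart ↔ s.arrowAtStart := by
  cases s <;> rfl

lemma toInduce_arrowAtEnd (s : G.Step a b) (ha : a ∈ W) (hb : b ∈ W) :
    (s.toInduce ha hb).arrowAtEnd ↔ s.arrowAtEnd := by
  cases s <;> rfl

end Step

namespace Walk

def snoc {a b c : V} (w : G.Walk a b) (s : G.Step b c) : G.Walk a c :=
  w.append (.cons s .nil)

def ArrowAtStart : ∀ {a b : V}, G.Walk a b → Prop
  | _, _, .nil => False
  | _, _, .cons s _ => s.arrowAtStart

def ArrowAtEnd : ∀ {a b : V}, G.Walk a b → Prop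
  | _, _, .nil => False
  | _, _, .cons s .nil => s.arrowAtEnd
  | _, _, .cons _ (.cons t w) => (Walk.cons t w).ArrowAtEnd

lemma arrowAtEnd_snoc : ∀ {a b c : V} (w : G.Walk a b) (s : G.Step b c),
    (w.snoc s).ArrowAtEnd ↔ s.arrowAtEnd
  | _, _, _, .nil, _ => Iff.rfl
  | _, _, _, .cons _ .nil, _ => Iff.rfl
  | _, _, _, .cons _ (.cons t w), s => arrowAtEnd_snoc (.cons t w) s

lemma start_mem_verts {a b : V} (w : G.Walk a b) : a ∈ w.verts := by
  cases w <;> simp [verts]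

variable {W C : Set V}

def toInduce : ∀ {a b : V} (w : G.Walk a b), (∀ v ∈ w.verts, v ∈ W) →
    (G.induce W).Walk a b
  | _, _, .nil, _ => .nil
  | _, _, .cons s w, hW =>
      .cons (s.toInduce (hW _ (start_mem_verts _)) (hW _ (.tail _ w.start_mem_verts)))
        (w.toInduce fun v hv => hW v (.tail _ hv))

namespace IsMConnecting

lemma snoc : ∀ {a b c : V} {w : G.Walk a b}, w.IsMConnecting C → ∀ (s : G.Step b c),
    ((w.ArrowAtEnd ∧ s.arrowAtStart) ↔ b ∈ C) → (w.snoc s).IsMConnecting C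
  | _, _, _, .nil, _, _, _ => trivial
  | _, _, _, .cons _ .nil, _, _, h => ⟨h, trivial⟩
  | _, _, _, .cons _ (.cons _ _), hw, s, h => ⟨hw.1, snoc hw.2 s h⟩

lemma tail {a b c : V} {s : G.Step a b} {w : G.Walk b c}
    (hw : (Walk.cons s w).IsMConnecting C) : w.IsMConnecting C := by
  cases w with
  | nil => trivial
  | cons => exact hw.2

lemma toInduce : ∀ {a b : V} {w : G.Walk a b} (hW : ∀ v ∈ w.verts, v ∈ W),
    w.IsMConnecting C → (w.toInduce hW).IsMConnecting C
  | _, _, .nil, _, _ => trivial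
  | _, _, .cons _ .nil, _, _ => trivial
  | _, _, .cons _ (.cons _ _), hW, hw =>
      ⟨by simpa only [Step.toInduce_arrowAtEnd, Step.toInduce_arrowAtStart] using hw.1,
        toInduce (fun v hv => hW v (.tail _ hv)) hw.2⟩

end IsMConnecting

end Walk

section Ancestral

variable {S C : Set V}

lemma mem_an_of_isMConnecting_fwd (hCS : C ⊆ S) {m n y : V} (h : G.dir m n) (w : G.Walk n y)
    (hw : (Walk.cons (.fwd h) w).IsMConnecting C) (hy : y ∈ G.an S) : m ∈ G.an S := by
  induction w generalizing m with
  | nil => exact mem_an_of_dir h hy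
  | cons t w ih =>
    refine mem_an_of_dir h ?_
    by_cases ht : t.arrowAtStart
    · exact mem_an_of_mem (hCS (hw.1.mp ⟨trivial, ht⟩))
    · cases t with
      | fwd h' => exact ih h' hw.2 hy
      | bwd _ | bi _ => exact absurd trivial ht

lemma Walk.IsMConnecting.mem_an (hCS : C ⊆ S) {x y : V} {w : G.Walk x y}
    (hw : w.IsMConnecting C) (hx : x ∈ G.an S) (hy : y ∈ G.an S) :
    ∀ v ∈ w.verts, v ∈ G.an S := by
  induction w with
  | nil => simpa [Walk.verts] using hx
  | @cons x m y s w ih =>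
    have hm : m ∈ G.an S := by
      cases w with
      | nil => exact hy
      | cons t w =>
        by_cases hcol : s.arrowAtEnd ∧ t.arrowAtStart
        · exact mem_an_of_mem (hCS (hw.1.mp hcol))
        · rcases not_and_or.mp hcol with hs | ht
          · cases s with
            | bwd h => exact mem_an_of_dir h hx
            | fwd _ | bi _ => exact absurd trivial hs
          · cases t with
            | fwd h => exact mem_an_of_isMConnecting_fwd hCS h w hw.2 hy
            | bwd _ | bi _ => exact absurd trivial ht
    simpa [Walk.verts, hx] using ih hw.tail hm hy

end Ancestral

section Augmented

variable {C : Set V}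

lemma Walk.IsMConnecting.exists_isPureCollider_cons {x m y : V} {s : G.Step x m}
    {w : G.Walk m y} (hw : (Walk.cons s w).IsMConnecting C) (hy : y ∉ C) :
    ∃ z, z ∉ C ∧ ∃ p : G.Walk m z, (Walk.cons s p).IsPureCollider ∧
      Relation.ReflTransGen (fun u v => G.ColliderConn u v ∧ v ∉ C) z y := by
  induction w generalizing x with
  | nil => exact ⟨_, hy, .nil, trivial, .refl⟩
  | @cons m n y t w ih =>
    obtain ⟨z, hz, p, hp, hzy⟩ := ih hw.2 hy
    by_cases hm : m ∈ C
    · exact ⟨z, hz, .cons t p, ⟨(hw.1.mpr hm).1, (hw.1.mpr hm).2, hp⟩, hzy⟩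
    · exact ⟨m, hm, .nil, trivial, .head ⟨⟨.cons t p, Nat.succ_pos _, hp⟩, hz⟩ hzy⟩

lemma Walk.IsMConnecting.reflTransGen_colliderConn {x y : V} {w : G.Walk x y}
    (hw : w.IsMConnecting C) (hy : y ∉ C) :
    Relation.ReflTransGen (fun u v => G.ColliderConn u v ∧ v ∉ C) x y := by
  cases w with
  | nil => exact .refl
  | cons s w =>
    obtain ⟨z, hz, p, hp, hzy⟩ := hw.exists_isPureCollider_cons hy
    exact .head ⟨⟨.cons s p, Nat.succ_pos _, hp⟩, hz⟩ hzy

end Augmented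

section Reach

variable (G) in
def dirOutside (C : Set V) (x y : V) : Prop := G.dir x y ∧ y ∉ C

variable {A B C : Set V}

lemma notMem_of_reflTransGen_dirOutside {u p : V}
    (h : Relation.ReflTransGen (G.dirOutside C) u p) (hu : u ∉ C) : p ∉ C := by
  induction h with
  | refl => exact hu
  | tail _ h _ => exact h.2

lemma reflTransGen_dirOutside_or {u s : V} (h : Relation.ReflTransGen G.dir u s) (hu : u ∉ C) :
    (∃ p t, t ∈ C ∧ Relation.ReflTransGen (G.dirOutside C) u p ∧ G.dir p t) ∨
      (s ∉ C ∧ Relation.ReflTransGen (G.dirOutside C) u s) := by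
  induction h using Relation.ReflTransGen.head_induction_on with
  | refl => exact .inr ⟨hu, .refl⟩
  | @head x z hxz _ ih =>
    by_cases hz : z ∈ C
    · exact .inl ⟨x, z, hz, .refl, hxz⟩
    · rcases ih hz with ⟨p, t, ht, hzp, hpt⟩ | ⟨hs, hzs⟩
      · exact .inl ⟨p, t, ht, .head ⟨hxz, hz⟩ hzp, hpt⟩
      · exact .inr ⟨hs, .head ⟨hxz, hz⟩ hzs⟩

lemma Walk.IsMConnecting.exists_descend {a u p : V} {w : G.Walk a u} (hw : w.IsMConnecting C)
    (hu : u ∉ C) (h : Relation.ReflTransGen (G.dirOutside C) u p) :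
    ∃ w' : G.Walk a p, w'.IsMConnecting C := by
  induction h using Relation.ReflTransGen.head_induction_on with
  | refl => exact ⟨w, hw⟩
  | head hxz _ ih => exact ih (hw.snoc (.fwd hxz.1) (iff_of_false (fun h => h.2) hu)) hxz.2

lemma Walk.IsMConnecting.exists_ascend {a u p : V} {w : G.Walk a p} (hw : w.IsMConnecting C)
    (hl : ¬ w.ArrowAtEnd) (h : Relation.ReflTransGen (G.dirOutside C) u p) :
    ∃ w' : G.Walk a u, w'.IsMConnecting C ∧ ¬ w'.ArrowAtEnd := by
  induction h with
  | refl => exact ⟨w, hw, hl⟩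
  | tail _ hyz ih =>
    refine ih (hw.snoc (.bwd hyz.1) (iff_of_false (fun h => hl h.1) hyz.2)) ?_
    simp [Walk.arrowAtEnd_snoc, Step.arrowAtEnd]

lemma MSep.exists_isMConnecting_not_arrowAtEnd (hsep : G.MSep A B C) {u : V} (hu : u ∉ C)
    (huS : u ∈ G.an (A ∪ B ∪ C)) (h : ∃ a ∈ A, ∃ w : G.Walk a u, w.IsMConnecting C) :
    ∃ a ∈ A, ∃ w : G.Walk a u, w.IsMConnecting C ∧ ¬ w.ArrowAtEnd := by
  obtain ⟨a, ha, w, hw⟩ := h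
  obtain ⟨s, hs, hus⟩ := huS
  rcases reflTransGen_dirOutside_or hus hu with ⟨p, t, ht, hup, hpt⟩ | ⟨hsC, hus⟩
  · obtain ⟨w₁, hw₁⟩ := hw.exists_descend hu hup
    have hp : p ∉ C := notMem_of_reflTransGen_dirOutside hup hu
    have hw₂ : ((w₁.snoc (.fwd hpt)).snoc (.bwd hpt)).IsMConnecting C :=
      (hw₁.snoc (.fwd hpt) (iff_of_false (fun h => h.2) hp)).snoc (.bwd hpt)
        (iff_of_true ⟨(Walk.arrowAtEnd_snoc _ _).mpr trivial, trivial⟩ ht)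
    obtain ⟨w', hw', hl'⟩ :=
      hw₂.exists_ascend (by simp [Walk.arrowAtEnd_snoc, Step.arrowAtEnd]) hup
    exact ⟨a, ha, w', hw', hl'⟩
  · rcases hs with (hsA | hsB) | hsC'
    · obtain ⟨w', hw', hl'⟩ :=
        Walk.IsMConnecting.exists_ascend (C := C) (w := (.nil : G.Walk s s)) trivial id hus
      exact ⟨s, hsA, w', hw', hl'⟩
    · obtain ⟨w', hw'⟩ := hw.exists_descend hu hus
      exact absurd hw' (hsep a ha s hsB w')
    · exact absurd hsC' hsC

variable (G) in
/-- The arrowhead condition lets the walk be continued through `u ∈ C` as a collider. -/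
def MReach (A C : Set V) (u : V) : Prop :=
  ∃ a ∈ A, ∃ w : G.Walk a u, w.IsMConnecting C ∧ (u ∈ C → w.ArrowAtEnd)

lemma MReach.of_mem {a : V} (ha : a ∈ A) (haC : a ∉ C) : G.MReach A C a :=
  ⟨a, ha, .nil, trivial, fun h => absurd h haC⟩

lemma MReach.step (hsep : G.MSep A B C) {u v : V} (h : G.MReach A C u)
    (huS : u ∈ G.an (A ∪ B ∪ C)) (s : G.Step u v) (hu : u ∈ C → s.arrowAtStart)
    (hv : v ∈ C → s.arrowAtEnd) : G.MReach A C v := by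
  obtain ⟨a, ha, w, hw, hwu⟩ := h
  by_cases huC : u ∈ C
  · exact ⟨a, ha, w.snoc s, hw.snoc s (iff_of_true ⟨hwu huC, hu huC⟩ huC),
      fun hvC => (Walk.arrowAtEnd_snoc w s).mpr (hv hvC)⟩
  · obtain ⟨a, ha, w, hw, hl⟩ :=
      hsep.exists_isMConnecting_not_arrowAtEnd huC huS ⟨a, ha, w, hw⟩
    exact ⟨a, ha, w.snoc s, hw.snoc s (iff_of_false (fun h => hl h.1) huC),
      fun hvC => (Walk.arrowAtEnd_snoc w s).mpr (hv hvC)⟩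

lemma MReach.of_isPureCollider (hsep : G.MSep A B C) :
    ∀ {x y : V} (p : (G.induce (G.an (A ∪ B ∪ C))).Walk x y), p.IsPureCollider → y ∉ C →
      (x ∈ C → p.ArrowAtStart) → G.MReach A C x → G.MReach A C y
  | _, _, .nil, _, _, _, h => h
  | _, _, .cons s .nil, _, hy, hx, h =>
      h.step hsep s.left_mem_of_induce s.ofInduce (s.ofInduce_arrowAtStart.mpr ∘ hx)
        (absurd · hy)
  | _, _, .cons s (.cons t p), hp, hy, hx, h =>
      of_isPureCollider hsep (.cons t p) hp.2.2 hy (fun _ => hp.2.1)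
        (h.step hsep s.left_mem_of_induce s.ofInduce (s.ofInduce_arrowAtStart.mpr ∘ hx)
          fun _ => s.ofInduce_arrowAtEnd.mpr hp.1)

lemma MReach.of_reflTransGen (hsep : G.MSep A B C) {x y : V}
    (h : Relation.ReflTransGen
      (fun u v => (G.induce (G.an (A ∪ B ∪ C))).ColliderConn u v ∧ v ∉ C) x y)
    (hx : x ∉ C) (hr : G.MReach A C x) : G.MReach A C y := by
  induction h using Relation.ReflTransGen.head_induction_on with
  | refl => exact hr
  | head hxz _ ih =>
    obtain ⟨⟨p, -, hp⟩, hz⟩ := hxz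
    exact ih hz (hr.of_isPureCollider hsep p hp hz (absurd · hx))

end Reach

end MixedGraph

theorem stmt_8_general {V : Type*} (G : MixedGraph V) (A B C : Set V)
    (hAC : Disjoint A C) (hBC : Disjoint B C) :
    G.MSep A B C ↔
      MixedGraph.UndirSep
        (fun u v => (G.induce (G.an (A ∪ B ∪ C))).ColliderConn u v) A B C := by
  constructor
  · intro hsep a ha b hb hab
    have haC : a ∉ C := Set.disjoint_left.mp hAC ha
    obtain ⟨a', ha', w, hw, -⟩ :=
      (MixedGraph.MReach.of_mem ha haC).of_reflTransGen hsep hab haC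
    exact hsep a' ha' b hb w hw
  · intro hsep a ha b hb w hw
    have hW : ∀ v ∈ w.verts, v ∈ G.an (A ∪ B ∪ C) :=
      hw.mem_an Set.subset_union_right (MixedGraph.mem_an_of_mem (by simp [ha]))
        (MixedGraph.mem_an_of_mem (by simp [hb]))
    exact hsep a ha b hb
      ((hw.toInduce hW).reflTransGen_colliderConn (Set.disjoint_left.mp hBC hb))

/-- `A ⊥_m B | C` in `G` iff `C` separates `A` and `B` in the augmented graph of the
subgraph induced by `an(A∪B∪C)` (adjacency = collider connectedness). -/
theorem stmt_8 {V : Type*} (G : MixedGraph V) (A B C : Set V)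
    (hAB : Disjoint A B) (hAC : Disjoint A C) (hBC : Disjoint B C) :
    G.MSep A B C ↔
      MixedGraph.UndirSep
        (fun u v => (G.induce (G.an (A ∪ B ∪ C))).ColliderConn u v) A B C :=
  stmt_8_general G A B C hAC hBC
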